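/- arXiv:2302.08740 — 2 statements merged into one kernel-verified Lean document; each statement's English description precedes it below -/
import Mathlib

section
/- Greedy peeling is exact for maximizing the minimum weighted degree: consider the peeling process that, starting from V, repeatedly removes a vertex of minimum query-biased degree ρ in the current set. For every subset S ⊆ V, there exists some intermediate set V_t produced by the peeling that satisfies min_{u ∈ V_t} ρ_{V_t}(u) ≥ min_{u ∈ S} ρ_S(u). Hence the maximum over intermediate sets of the minimum query-biased degree equals the maximum over all subsets. -/
open Finset

/-- Query-biased temporal degree: sum of weights of neighbors of `u` inside `C`. -/
def qbd {V : Type*} [DecidableEq V] (G : SimpleGraph V) [DecidableRel G.Adj]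
    (w : V → ℝ) (C : Finset V) (u : V) : ℝ :=
  ∑ v ∈ C.filter (fun v => G.Adj u v), w v

/-! Let `S` be any nonempty set and `t` the first step at which peeling removes a vertex `u` of
`S`. Then `S ⊆ V_t`, so by monotonicity of `ρ` in the ambient set (weights are nonnegative),
`min_S ρ_S ≤ ρ_S(u) ≤ ρ_{V_t}(u) = min_{V_t} ρ_{V_t}`. Such a `t` exists because the sets `V_t`
shrink strictly while nonempty. Hence every value `min_S ρ_S` is dominated by a value attained
along the peeling, which gives the equality of suprema. -/

theorem Finset.exists_subset_not_subset_succ {α : Type*} {s : Finset α} (hs : s.Nonempty)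
    {A : ℕ → Finset α} (h0 : s ⊆ A 0) (hA : ∀ t, (A t).Nonempty → A (t + 1) ⊂ A t) :
    ∃ t, s ⊆ A t ∧ ¬ s ⊆ A (t + 1) := by
  by_contra! hstay
  have hsub : ∀ t, s ⊆ A t := fun t => Nat.rec h0 (fun t ih => hstay t ih) t
  have hcard : ∀ t, #(A t) + t ≤ #(A 0) := by
    intro t
    induction t with
    | zero => simp
    | succ t ih =>
      have := card_lt_card (hA t (hs.mono (hsub t)))
      omega
  have := hcard (#(A 0) + 1)
  have := card_pos.mpr (hs.mono (hsub (#(A 0) + 1)))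
  omega

section qbd

variable {V : Type*} [DecidableEq V] {G : SimpleGraph V} [DecidableRel G.Adj] {w : V → ℝ}

theorem qbd_mono (hw : ∀ v, 0 ≤ w v) {S C : Finset V} (hSC : S ⊆ C) (u : V) :
    qbd G w S u ≤ qbd G w C u :=
  sum_le_sum_of_subset_of_nonneg (filter_subset_filter _ hSC) fun v _ _ => hw v

theorem inf'_qbd_le_of_argmin_mem (hw : ∀ v, 0 ≤ w v) {S C : Finset V} (hS : S.Nonempty)
    (hSC : S ⊆ C) {u : V} (huS : u ∈ S) (hmin : ∀ v ∈ C, qbd G w C u ≤ qbd G w C v) :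
    S.inf' hS (qbd G w S) ≤ C.inf' (hS.mono hSC) (qbd G w C) :=
  calc S.inf' hS (qbd G w S) ≤ qbd G w S u := inf'_le _ huS
    _ ≤ qbd G w C u := qbd_mono hw hSC u
    _ ≤ C.inf' (hS.mono hSC) (qbd G w C) := le_inf' _ _ hmin

end qbd

theorem stmt_6 {V : Type*} [Fintype V] [DecidableEq V]
    (G : SimpleGraph V) [DecidableRel G.Adj]
    (w : V → ℝ) (hw : ∀ v, 0 ≤ w v)
    (Vs : ℕ → Finset V)
    (h0 : Vs 0 = Finset.univ)
    (hstep : ∀ t, (Vs t).Nonempty →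
      ∃ u ∈ Vs t, (∀ v ∈ Vs t, qbd G w (Vs t) u ≤ qbd G w (Vs t) v) ∧
        Vs (t + 1) = (Vs t).erase u) :
    (∀ S : Finset V, ∀ hS : S.Nonempty, ∃ t, ∃ ht : (Vs t).Nonempty,
      S.inf' hS (qbd G w S) ≤ (Vs t).inf' ht (qbd G w (Vs t))) ∧
    sSup {β : ℝ | ∃ t, ∃ ht : (Vs t).Nonempty, β = (Vs t).inf' ht (qbd G w (Vs t))} =
      sSup {β : ℝ | ∃ S : Finset V, ∃ hS : S.Nonempty, β = S.inf' hS (qbd G w S)} := by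
  have hshrink : ∀ t, (Vs t).Nonempty → Vs (t + 1) ⊂ Vs t := fun t ht => by
    obtain ⟨u, hu, -, hnext⟩ := hstep t ht
    exact hnext ▸ erase_ssubset hu
  have peeling_dominates : ∀ S : Finset V, ∀ hS : S.Nonempty, ∃ t, ∃ ht : (Vs t).Nonempty,
      S.inf' hS (qbd G w S) ≤ (Vs t).inf' ht (qbd G w (Vs t)) := by
    intro S hS
    obtain ⟨t, hSt, hSt'⟩ := exists_subset_not_subset_succ hS (h0 ▸ subset_univ S) hshrink
    obtain ⟨u, -, hmin, hnext⟩ := hstep t (hS.mono hSt)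
    have huS : u ∈ S := by simpa [hnext, subset_erase, hSt] using hSt'
    exact ⟨t, hS.mono hSt, inf'_qbd_le_of_argmin_mem hw hS hSt huS hmin⟩
  refine ⟨peeling_dominates, csSup_eq_csSup_of_forall_exists_le ?_ ?_⟩
  · rintro _ ⟨t, ht, rfl⟩
    exact ⟨_, ⟨Vs t, ht, rfl⟩, le_rfl⟩
  · rintro _ ⟨S, hS, rfl⟩
    obtain ⟨t, ht, hle⟩ := peeling_dominates S hS
    exact ⟨_, ⟨t, ht, rfl⟩, hle⟩
end

section
/- For the density objective f(C) = g(C)/|C| where g is a monotone nondecreasing supermodular set function with g(∅) = 0, any global maximizer C* of f satisfies f(C* ∪ C_q) ≥ f(C_q) for every nonempty set C_q. -/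
/-!
Write `A = C*`, `B = C_q` and `λ = f A ≥ μ = f B`. Supermodularity gives
`g (A ∪ B) ≥ g A + g B - g (A ∩ B)`, and optimality of `A` bounds `g (A ∩ B) ≤ λ #(A ∩ B)`, so
`g (A ∪ B) ≥ λ (#A - #(A ∩ B)) + μ #B ≥ μ (#A - #(A ∩ B) + #B) = μ #(A ∪ B)`:
the elements of `A \ B` have density at least `λ ≥ μ`.
-/

open Finset

section Density

variable {V : Type*} {g : Finset V → ℝ}

theorem div_card_mul_card_eq (hempty : g ∅ = 0) (C : Finset V) : g C / #C * #C = g C := by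
  rcases C.eq_empty_or_nonempty with rfl | hC
  · simp [hempty]
  · exact div_mul_cancel₀ _ (by exact_mod_cast hC.card_pos.ne')

theorem le_mul_card_of_div_card_le (hempty : g ∅ = 0) {C : Finset V} {l : ℝ}
    (hC : C.Nonempty → g C / #C ≤ l) : g C ≤ l * #C := by
  rcases C.eq_empty_or_nonempty with rfl | hne
  · simp [hempty]
  · rw [← div_card_mul_card_eq hempty C]
    exact mul_le_mul_of_nonneg_right (hC hne) (Nat.cast_nonneg _)

theorem mul_card_union_le [DecidableEq V] {A B : Finset V} {l m : ℝ}
    (hsuper : g A + g B ≤ g (A ∪ B) + g (A ∩ B)) (hA : l * #A ≤ g A)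
    (hinter : g (A ∩ B) ≤ l * #(A ∩ B)) (hB : m * #B ≤ g B) (hml : m ≤ l) :
    m * #(A ∪ B) ≤ g (A ∪ B) := by
  have hcard : (#(A ∪ B) : ℝ) + #(A ∩ B) = #A + #B := by exact_mod_cast card_union_add_card_inter A B
  have hinter_le : (#(A ∩ B) : ℝ) ≤ #A := by exact_mod_cast card_le_card inter_subset_left
  have hgain : m * (#A - #(A ∩ B)) ≤ l * (#A - #(A ∩ B)) :=
    mul_le_mul_of_nonneg_right hml (sub_nonneg.2 hinter_le)
  linear_combination hsuper + hA + hB + hinter + hgain + m * hcard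

end Density

theorem stmt_15_general {V : Type*} [DecidableEq V]
    (g : Finset V → ℝ)
    (hsuper : ∀ A B : Finset V, g A + g B ≤ g (A ∪ B) + g (A ∩ B))
    (hempty : g ∅ = 0)
    (f : Finset V → ℝ) (hf : ∀ C, f C = g C / (C.card : ℝ))
    (Cstar : Finset V)
    (hopt : ∀ C : Finset V, C.Nonempty → f C ≤ f Cstar) :
    ∀ Cq : Finset V, Cq.Nonempty → f Cq ≤ f (Cstar ∪ Cq) := by
  intro Cq hCq
  have hdens : ∀ C, C.Nonempty → g C / #C ≤ g Cstar / #Cstar := fun C hC => by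
    simpa only [hf] using hopt C hC
  rw [hf, hf, le_div_iff₀ (by exact_mod_cast (hCq.mono subset_union_right).card_pos)]
  exact mul_card_union_le (hsuper Cstar Cq) (div_card_mul_card_eq hempty Cstar).le
    (le_mul_card_of_div_card_le hempty (hdens _)) (div_card_mul_card_eq hempty Cq).le
    (hdens Cq hCq)

theorem stmt_15 {V : Type*} [Fintype V] [DecidableEq V]
    (g : Finset V → ℝ) (hg0 : ∀ C, 0 ≤ g C)
    (hmono : ∀ A B : Finset V, A ⊆ B → g A ≤ g B)
    (hsuper : ∀ A B : Finset V, g A + g B ≤ g (A ∪ B) + g (A ∩ B))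
    (hempty : g ∅ = 0)
    (f : Finset V → ℝ) (hf : ∀ C, f C = g C / (C.card : ℝ))
    (Cstar : Finset V) (hCstar : Cstar.Nonempty)
    (hopt : ∀ C : Finset V, C.Nonempty → f C ≤ f Cstar) :
    ∀ Cq : Finset V, Cq.Nonempty → f Cq ≤ f (Cstar ∪ Cq) :=
  stmt_15_general g hsuper hempty f hf Cstar hopt
end
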